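/- arXiv:2202.09354 — 2 statements merged into one kernel-verified Lean document; each statement's English description precedes it below -/
import Mathlib

section
/- Under the stated hypotheses, for every k ∈ ℕ, every t ∈ [0,T] and all x, y ∈ M, the k-th iterate of Φ satisfies d_t(Φ^k(x), Φ^k(y))² ≤ ((K t)^k / k!) · d(x, y)². In particular, d(Φ^{k+1}(m), Φ^k(m)) ≤ ((K T)^k / k!)^{1/2} · d(Φ(m), m) for every m ∈ M and k ∈ ℕ. -/
open MeasureTheory

/-- Picard-type iterate estimate: if `(d_t)_{t ∈ [0,T]}` is a nondecreasing-in-`t` family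
of pseudometrics on a metric space `M` with `d_T = dist`, and
`d_t(Φx, Φy)² ≤ K ∫₀ᵗ d_s(x,y)² ds`, then for every `k`,
`d_t(Φᵏx, Φᵏy)² ≤ ((K t)ᵏ / k!) d(x,y)²`, and in particular
`d(Φ^{k+1} m, Φᵏ m) ≤ ((K T)ᵏ / k!)^{1/2} d(Φ m, m)`. -/
theorem picard_iterate_estimate {M : Type*} [MetricSpace M]
    (T K : ℝ) (hT : 0 < T) (hK : 0 ≤ K)
    (dt : ℝ → M → M → ℝ)
    (h_nonneg : ∀ t ∈ Set.Icc (0 : ℝ) T, ∀ x y : M, 0 ≤ dt t x y)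
    (h_self : ∀ t ∈ Set.Icc (0 : ℝ) T, ∀ x : M, dt t x x = 0)
    (h_symm : ∀ t ∈ Set.Icc (0 : ℝ) T, ∀ x y : M, dt t x y = dt t y x)
    (h_tri : ∀ t ∈ Set.Icc (0 : ℝ) T, ∀ x y z : M, dt t x z ≤ dt t x y + dt t y z)
    (h_mono : ∀ x y : M, MonotoneOn (fun t => dt t x y) (Set.Icc (0 : ℝ) T))
    (h_top : ∀ x y : M, dt T x y = dist x y)
    (Φ : M → M)
    (hΦ : ∀ t ∈ Set.Icc (0 : ℝ) T, ∀ x y : M,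
      dt t (Φ x) (Φ y) ^ 2 ≤ K * ∫ s in (0 : ℝ)..t, dt s x y ^ 2) :
    (∀ k : ℕ, ∀ t ∈ Set.Icc (0 : ℝ) T, ∀ x y : M,
      dt t (Φ^[k] x) (Φ^[k] y) ^ 2 ≤ (K * t) ^ k / (Nat.factorial k : ℝ) * dist x y ^ 2) ∧
    (∀ m : M, ∀ k : ℕ,
      dist (Φ^[k + 1] m) (Φ^[k] m) ≤
        Real.sqrt ((K * T) ^ k / (Nat.factorial k : ℝ)) * dist (Φ m) m) := by
  have hmain : ∀ k : ℕ, ∀ t ∈ Set.Icc (0 : ℝ) T, ∀ x y : M,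
      dt t (Φ^[k] x) (Φ^[k] y) ^ 2 ≤ (K * t) ^ k / (Nat.factorial k : ℝ) * dist x y ^ 2 := by
    intro k
    induction k with
    | zero =>
      intro t ht x y
      simp only [Function.iterate_zero, id_eq, pow_zero, Nat.factorial_zero, Nat.cast_one]
      have h1 : dt t x y ≤ dist x y := by
        rw [← h_top x y]
        exact h_mono x y ht (Set.right_mem_Icc.2 hT.le) ht.2
      have := pow_le_pow_left₀ (h_nonneg t ht x y) h1 2
      linarith
    | succ k ih =>
      intro t ht x y
      have hTmem : ∀ s ∈ Set.Icc (0:ℝ) t, s ∈ Set.Icc (0:ℝ) T :=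
        fun s hs => Set.Icc_subset_Icc le_rfl ht.2 hs
      set C := dist x y ^ 2 with hC
      have hCnn : 0 ≤ C := sq_nonneg _
      have hfint : IntervalIntegrable (fun s => dt s (Φ^[k] x) (Φ^[k] y) ^ 2)
          MeasureTheory.volume 0 t := by
        apply MonotoneOn.intervalIntegrable
        rw [Set.uIcc_of_le ht.1]
        intro a ha b hb hab
        exact pow_le_pow_left₀ (h_nonneg a (hTmem a ha) _ _)
          (h_mono _ _ (hTmem a ha) (hTmem b hb) hab) 2
      have hgint : IntervalIntegrable (fun s => (K * s) ^ k / (Nat.factorial k : ℝ) * C)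
          MeasureTheory.volume 0 t := by
        apply Continuous.intervalIntegrable
        fun_prop
      have hle : ∫ s in (0:ℝ)..t, dt s (Φ^[k] x) (Φ^[k] y) ^ 2 ≤
          ∫ s in (0:ℝ)..t, (K * s) ^ k / (Nat.factorial k : ℝ) * C := by
        apply intervalIntegral.integral_mono_on ht.1 hfint hgint
        intro s hs
        exact ih s (hTmem s hs) x y
      have hval : ∫ s in (0:ℝ)..t, (K * s) ^ k / (Nat.factorial k : ℝ) * C
          = K ^ k / (Nat.factorial k : ℝ) * C * (t ^ (k+1) / (k+1)) := by
        have : (fun s => (K * s) ^ k / (Nat.factorial k : ℝ) * C)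
            = fun s => (K ^ k / (Nat.factorial k : ℝ) * C) * s ^ k := by
          funext s; rw [mul_pow]; ring
        rw [this, intervalIntegral.integral_const_mul, integral_pow]
        push_cast
        ring
      have hstep := hΦ t ht (Φ^[k] x) (Φ^[k] y)
      rw [Function.iterate_succ_apply', Function.iterate_succ_apply']
      calc dt t (Φ (Φ^[k] x)) (Φ (Φ^[k] y)) ^ 2
          ≤ K * ∫ s in (0:ℝ)..t, dt s (Φ^[k] x) (Φ^[k] y) ^ 2 := hstep
        _ ≤ K * (K ^ k / (Nat.factorial k : ℝ) * C * (t ^ (k+1) / (k+1))) := by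
            rw [← hval]; exact mul_le_mul_of_nonneg_left hle hK
        _ = (K * t) ^ (k+1) / (Nat.factorial (k+1) : ℝ) * C := by
            rw [Nat.factorial_succ, mul_pow]
            have h1 : (Nat.factorial k : ℝ) ≠ 0 := Nat.cast_ne_zero.2 (Nat.factorial_ne_zero k)
            have h2 : ((k:ℝ) + 1) ≠ 0 := by positivity
            push_cast
            field_simp
            ring
  refine ⟨hmain, ?_⟩
  intro m k
  have h1 := hmain k T (Set.right_mem_Icc.2 hT.le) (Φ m) m
  rw [h_top] at h1
  have hd : dist (Φ^[k + 1] m) (Φ^[k] m) = dt T (Φ^[k] (Φ m)) (Φ^[k] m) := by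
    rw [h_top, Function.iterate_succ_apply]
  have hnn : (0:ℝ) ≤ (K * T) ^ k / (Nat.factorial k : ℝ) := by positivity
  rw [hd, h_top]
  have h2 := Real.sqrt_le_sqrt h1
  rwa [Real.sqrt_sq dist_nonneg,
    Real.sqrt_mul hnn, Real.sqrt_sq dist_nonneg] at h2
end

section
/- Let (Ω, 𝓕, ℙ) be a probability space, and let Y : Ω → ℝ^a, Z : Ω → ℝ^b, ξ : Ω → ℝ^c be random variables such that ξ is independent of the pair (Y, Z). Let F : ℝ^a × ℝ^c → ℝ^e be measurable and set X := F(Y, ξ). Then X and Z are conditionally independent given the σ-algebra σ(Y) generated by Y. -/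
/-!
Conditioning on `σ(Y, Z)` freezes `(Y, Z)` and, `ξ` being independent of it, integrates `ξ` out:
`P(X ∈ s | Y, Z) = h(Y)` with `h y = P(F(y, ξ) ∈ s)`. This is already `σ(Y)`-measurable, so
the tower property and pulling out `h(Y)` give
`P(X ∈ s, Z ∈ t | Y) = E[h(Y) 1{Z ∈ t} | Y] = P(X ∈ s | Y) P(Z ∈ t | Y)`.
-/

open MeasureTheory ProbabilityTheory

section IndepFun

variable {Ω α δ : Type*} {mΩ : MeasurableSpace Ω} [MeasurableSpace α] [MeasurableSpace δ]
  {μ : Measure Ω} [IsProbabilityMeasure μ] {W : Ω → α} {ξ : Ω → δ}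

lemma measure_preimage_inter_prodMk_preimage_of_indepFun (hW : Measurable W) (hξ : Measurable ξ)
    (hindep : IndepFun ξ W μ) {C : Set α} (hC : MeasurableSet C) {D : Set (α × δ)}
    (hD : MeasurableSet D) :
    μ (W ⁻¹' C ∩ (fun ω ↦ (W ω, ξ ω)) ⁻¹' D) =
      ∫⁻ w in C, μ.map ξ (Prod.mk w ⁻¹' D) ∂μ.map W := by
  have hlaw : μ.map (fun ω ↦ (W ω, ξ ω)) = (μ.map W).prod (μ.map ξ) :=
    (indepFun_iff_map_prod_eq_prod_map_map hW.aemeasurable hξ.aemeasurable).mp hindep.symm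
  calc μ (W ⁻¹' C ∩ (fun ω ↦ (W ω, ξ ω)) ⁻¹' D)
      = μ.map (fun ω ↦ (W ω, ξ ω)) (D ∩ C ×ˢ Set.univ) := by
        rw [Measure.map_apply (hW.prodMk hξ) (hD.inter (hC.prod .univ))]
        congr 1; ext ω; simp [and_comm]
    _ = ((μ.map W).restrict C).prod (μ.map ξ) D := by
        rw [hlaw, ← Measure.restrict_apply hD, ← Measure.restrict_univ (μ := μ.map ξ),
          Measure.prod_restrict, Measure.restrict_univ]
    _ = ∫⁻ w in C, μ.map ξ (Prod.mk w ⁻¹' D) ∂μ.map W := Measure.prod_apply hD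

lemma measurable_measureReal_prodMk_left {ν : Measure δ} [SFinite ν] {D : Set (α × δ)}
    (hD : MeasurableSet D) : Measurable fun w ↦ ν.real (Prod.mk w ⁻¹' D) :=
  (measurable_measure_prodMk_left hD).ennreal_toReal

lemma condExp_prodMk_preimage_ae_eq_of_indepFun (hW : Measurable W) (hξ : Measurable ξ)
    (hindep : IndepFun ξ W μ) {D : Set (α × δ)} (hD : MeasurableSet D) :
    μ⟦(fun ω ↦ (W ω, ξ ω)) ⁻¹' D | MeasurableSpace.comap W inferInstance⟧ =ᵐ[μ]
      fun ω ↦ (μ.map ξ).real (Prod.mk (W ω) ⁻¹' D) := by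
  have hg := measurable_measureReal_prodMk_left (ν := μ.map ξ) hD
  have hbound : ∀ w, ‖(μ.map ξ).real (Prod.mk w ⁻¹' D)‖ ≤ 1 := fun w ↦ by
    rw [Real.norm_of_nonneg measureReal_nonneg]
    have : IsProbabilityMeasure (μ.map ξ) := Measure.isProbabilityMeasure_map hξ.aemeasurable
    exact measureReal_le_one
  refine (ae_eq_condExp_of_forall_setIntegral_eq hW.comap_le
    ((integrable_const 1).indicator ((hW.prodMk hξ) hD))
    (fun _ _ _ ↦ (Integrable.of_bound (hg.comp hW).aestronglyMeasurable 1
      (.of_forall fun ω ↦ hbound (W ω))).integrableOn) ?_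
    (hg.comp (comap_measurable W)).aestronglyMeasurable).symm
  rintro _ ⟨C, hC, rfl⟩ -
  calc ∫ ω in W ⁻¹' C, (μ.map ξ).real (Prod.mk (W ω) ⁻¹' D) ∂μ
      = ∫ w in C, (μ.map ξ).real (Prod.mk w ⁻¹' D) ∂μ.map W :=
        (setIntegral_map hC hg.aestronglyMeasurable hW.aemeasurable).symm
    _ = (∫⁻ w in C, μ.map ξ (Prod.mk w ⁻¹' D) ∂μ.map W).toReal :=
        integral_toReal (measurable_measure_prodMk_left hD).aemeasurable
          (.of_forall fun _ ↦ measure_lt_top _ _)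
    _ = μ.real (W ⁻¹' C ∩ (fun ω ↦ (W ω, ξ ω)) ⁻¹' D) := by
        rw [measureReal_def, measure_preimage_inter_prodMk_preimage_of_indepFun hW hξ hindep hC hD]
    _ = ∫ ω in W ⁻¹' C, ((fun ω ↦ (W ω, ξ ω)) ⁻¹' D).indicator 1 ω ∂μ := by
        rw [integral_indicator_one ((hW.prodMk hξ) hD),
          measureReal_restrict_apply ((hW.prodMk hξ) hD), Set.inter_comm]

end IndepFun

lemma condExp_inter_ae_eq_mul_of_condExp_ae_eq {Ω : Type*} {m m₂ mΩ : MeasurableSpace Ω}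
    {μ : Measure Ω} [IsFiniteMeasure μ] (hm : m ≤ m₂) (hm₂ : m₂ ≤ mΩ) {A B : Set Ω}
    (hA : MeasurableSet A) (hB : MeasurableSet[m₂] B) {g : Ω → ℝ}
    (hg : StronglyMeasurable[m] g)
    (hAg : μ⟦A | m₂⟧ =ᵐ[μ] g) :
    μ⟦A ∩ B | m⟧ =ᵐ[μ] μ⟦A | m⟧ * μ⟦B | m⟧ := by
  have hg_int : Integrable g μ := integrable_condExp.congr hAg
  have hAm : μ⟦A | m⟧ =ᵐ[μ] g :=
    calc μ⟦A | m⟧ =ᵐ[μ] μ[μ⟦A | m₂⟧ | m] := (condExp_condExp_of_le hm hm₂).symm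
      _ =ᵐ[μ] μ[g | m] := condExp_congr_ae hAg
      _ = g := condExp_of_stronglyMeasurable (hm.trans hm₂) hg hg_int
  have hB_ind : B.indicator g = g * B.indicator fun _ ↦ (1 : ℝ) := by
    ext ω; by_cases hω : ω ∈ B <;> simp [hω]
  calc μ⟦A ∩ B | m⟧
      = μ[B.indicator (A.indicator fun _ ↦ (1 : ℝ)) | m] := by
        rw [Set.inter_comm, Set.indicator_indicator]
    _ =ᵐ[μ] μ[(μ[B.indicator (A.indicator fun _ ↦ (1 : ℝ)) | m₂]) | m] :=
        (condExp_condExp_of_le hm hm₂).symm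
    _ =ᵐ[μ] μ[B.indicator (μ⟦A | m₂⟧) | m] :=
        condExp_congr_ae (condExp_indicator ((integrable_const (1 : ℝ)).indicator hA) hB)
    _ =ᵐ[μ] μ[g * B.indicator fun _ ↦ (1 : ℝ) | m] :=
        hB_ind ▸ condExp_congr_ae hAg.indicator
    _ =ᵐ[μ] g * μ⟦B | m⟧ := condExp_mul_of_stronglyMeasurable_left hg
        (hB_ind ▸ hg_int.indicator (hm₂ _ hB))
        ((integrable_const (1 : ℝ)).indicator (hm₂ _ hB))
    _ =ᵐ[μ] μ⟦A | m⟧ * μ⟦B | m⟧ := hAm.symm.mul .rfl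

theorem condIndep_of_function_of_independent_general
    {Ω : Type*} [MeasurableSpace Ω] [StandardBorelSpace Ω]
    (μ : Measure Ω) [IsProbabilityMeasure μ]
    (a b c e : ℕ)
    (Y : Ω → EuclideanSpace ℝ (Fin a)) (Z : Ω → EuclideanSpace ℝ (Fin b))
    (ξ : Ω → EuclideanSpace ℝ (Fin c))
    (hY : Measurable Y) (hZ : Measurable Z) (hξ : Measurable ξ)
    (hindep : IndepFun ξ (fun ω => (Y ω, Z ω)) μ)
    (F : EuclideanSpace ℝ (Fin a) × EuclideanSpace ℝ (Fin c) → EuclideanSpace ℝ (Fin e))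
    (hF : Measurable F) :
    CondIndepFun (MeasurableSpace.comap Y inferInstance) hY.comap_le
      (fun ω => F (Y ω, ξ ω)) Z μ := by
  have hX : Measurable fun ω ↦ F (Y ω, ξ ω) := hF.comp (hY.prodMk hξ)
  rw [condIndepFun_iff_condExp_inter_preimage_eq_mul hX hZ]
  intro s t hs ht
  have hW := comap_measurable (m := inferInstance) fun ω ↦ (Y ω, Z ω)
  have hsec := measurable_measureReal_prodMk_left (ν := μ.map ξ) (hF hs)
  refine condExp_inter_ae_eq_mul_of_condExp_ae_eq (measurable_fst.comp hW).comap_le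
    (hY.prodMk hZ).comap_le (hX hs) ((measurable_snd.comp hW) ht)
    (hsec.comp (comap_measurable Y)).stronglyMeasurable ?_
  exact condExp_prodMk_preimage_ae_eq_of_indepFun (hY.prodMk hZ) hξ hindep
    (hF.comp (measurable_fst.fst.prodMk measurable_snd) hs)

/-- If `ξ` is independent of the pair `(Y, Z)` and `X = F(Y, ξ)` for measurable `F`, then
`X` and `Z` are conditionally independent given the σ-algebra generated by `Y`. -/
theorem condIndep_of_function_of_independent
    {Ω : Type*} [MeasurableSpace Ω] [StandardBorelSpace Ω] [Nonempty Ω]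
    (μ : Measure Ω) [IsProbabilityMeasure μ]
    (a b c e : ℕ)
    (Y : Ω → EuclideanSpace ℝ (Fin a)) (Z : Ω → EuclideanSpace ℝ (Fin b))
    (ξ : Ω → EuclideanSpace ℝ (Fin c))
    (hY : Measurable Y) (hZ : Measurable Z) (hξ : Measurable ξ)
    (hindep : IndepFun ξ (fun ω => (Y ω, Z ω)) μ)
    (F : EuclideanSpace ℝ (Fin a) × EuclideanSpace ℝ (Fin c) → EuclideanSpace ℝ (Fin e))
    (hF : Measurable F) :
    CondIndepFun (MeasurableSpace.comap Y inferInstance) hY.comap_le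
      (fun ω => F (Y ω, ξ ω)) Z μ :=
  condIndep_of_function_of_independent_general μ a b c e Y Z ξ hY hZ hξ hindep F hF
end
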